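/- For m ≥ 4, the gcd of the interior binomial coefficients gcd{ C(m+1, i) : 2 ≤ i ≤ m-1 } equals d(m)·d(m-1), where d(k) = gcd{ C(k+1, i) : 1 ≤ i ≤ k-1 } (equivalently, d(k) = p if k+1 is a power of the prime p and d(k) = 1 otherwise). -/

import Mathlib

/-- `d k` is the gcd of the binomial coefficients `C(k+1,1), ..., C(k+1,k-1)`. -/
def dGcd (k : ℕ) : ℕ := (Finset.Icc 1 (k - 1)).gcd fun i => (k + 1).choose i

/-!
Write `d₂(m)` for the gcd on the left. Since `d₂(m) ∣ C(m+1,2) ∣ (m+1)m` and `m+1`, `m` are coprime,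
`d₂(m) = gcd(d₂(m), m+1) · gcd(d₂(m), m)`. The first factor is `d(m)`, because `d(m)` only adds
`C(m+1,1) = m+1` to the list. The second is `d(m-1)`: Pascal's rule shows `d(m-1) ∣ d₂(m)`, and
conversely a divisor `b` of `m` dividing `C(m+1,i)` divides `(m+1) C(m,i) = (m+1-i) C(m+1,i)`, hence
`C(m,i)`, as `b` is coprime to `m+1`.
-/

open Finset

def dGcd₂ (m : ℕ) : ℕ := (Icc 2 (m - 1)).gcd fun i => (m + 1).choose i

lemma dGcd_eq_gcd_succ_dGcd₂ {m : ℕ} (hm : 2 ≤ m) : dGcd m = Nat.gcd (m + 1) (dGcd₂ m) := by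
  rw [dGcd, ← insert_Icc_add_one_left_eq_Icc (by omega : 1 ≤ m - 1), gcd_insert,
    Nat.choose_one_right]
  rfl

lemma dGcd₂_dvd_succ_mul_self {m : ℕ} (hm : 3 ≤ m) : dGcd₂ m ∣ (m + 1) * m := by
  have hchoose : (m + 1) * m = (m + 1).choose 2 * 2 := by
    simpa using Nat.add_one_mul_choose_eq m 1
  rw [hchoose]
  exact (gcd_dvd (mem_Icc.2 ⟨le_rfl, by omega⟩)).mul_right 2

lemma dGcd_dvd_choose {k i : ℕ} (hk : 2 ≤ k) (hi : i ∈ Icc 1 k) : dGcd k ∣ (k + 1).choose i := by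
  obtain ⟨hi1, hik⟩ := mem_Icc.1 hi
  rcases hik.lt_or_eq with hik | rfl
  · exact gcd_dvd (mem_Icc.2 ⟨hi1, by omega⟩)
  · have h : dGcd i ∣ (i + 1).choose 1 := gcd_dvd (mem_Icc.2 ⟨le_rfl, by omega⟩)
    rwa [Nat.choose_one_right, ← Nat.choose_succ_self_right] at h

lemma dGcd_dvd_dGcd₂_succ {k : ℕ} (hk : 2 ≤ k) : dGcd k ∣ dGcd₂ (k + 1) := by
  refine dvd_gcd fun i hi => ?_
  obtain ⟨hi2, hik⟩ := mem_Icc.1 hi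
  obtain ⟨j, rfl⟩ : ∃ j, i = j + 1 := ⟨i - 1, by omega⟩
  rw [Nat.choose_succ_succ]
  exact dvd_add (dGcd_dvd_choose hk (mem_Icc.2 ⟨by omega, by omega⟩))
    (dGcd_dvd_choose hk (mem_Icc.2 ⟨by omega, by omega⟩))

lemma dvd_dGcd_of_dvd_dGcd₂_succ {b k : ℕ} (hb : b ∣ k + 1) (hb₂ : b ∣ dGcd₂ (k + 1)) :
    b ∣ dGcd k := by
  have hcop : b.Coprime (k + 2) :=
    Nat.Coprime.coprime_dvd_left hb (Nat.coprime_self_add_right.2 (Nat.coprime_one_right _))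
  refine dvd_gcd fun i hi => ?_
  obtain ⟨hi1, hik⟩ := mem_Icc.1 hi
  rcases hi1.lt_or_eq with hi2 | rfl
  · have hdvd : b ∣ (k + 2).choose i := hb₂.trans (gcd_dvd (mem_Icc.2 ⟨hi2, by omega⟩))
    refine hcop.dvd_of_dvd_mul_right ?_
    rw [Nat.choose_mul_succ_eq]
    exact hdvd.mul_right _
  · simpa using hb

lemma gcd_dGcd₂_succ_eq_dGcd {k : ℕ} (hk : 2 ≤ k) : Nat.gcd (dGcd₂ (k + 1)) (k + 1) = dGcd k :=
  Nat.dvd_antisymm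
    (dvd_dGcd_of_dvd_dGcd₂_succ (Nat.gcd_dvd_right _ _) (Nat.gcd_dvd_left _ _))
    (Nat.dvd_gcd (dGcd_dvd_dGcd₂_succ hk)
      (by simpa using dGcd_dvd_choose hk (mem_Icc.2 ⟨le_rfl, by omega⟩)))

theorem interior_gcd_eq (m : ℕ) (hm : 4 ≤ m) :
    ((Finset.Icc 2 (m - 1)).gcd fun i => (m + 1).choose i) = dGcd m * dGcd (m - 1) := by
  change dGcd₂ m = _
  obtain ⟨k, rfl⟩ : ∃ k, m = k + 1 := ⟨m - 1, by omega⟩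
  have hcop : (k + 1 + 1).Coprime (k + 1) := Nat.coprime_self_add_left.2 (Nat.coprime_one_left _)
  rw [← (Nat.gcd_mul_gcd_eq_iff_dvd_mul_of_coprime hcop).2 (dGcd₂_dvd_succ_mul_self (by omega)),
    dGcd_eq_gcd_succ_dGcd₂ (by omega), Nat.gcd_comm, Nat.add_sub_cancel,
    gcd_dGcd₂_succ_eq_dGcd (by omega)]
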